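/- Let d ≥ 1, s ∈ (1/2, 1), γ ∈ (1, 2s), q > 1, and z > d(γ−1)/(2s−γ) with z finite. Define θ by 1/(γq) = 1/d + θ(1/q − 2s/d) + (1−θ)/z. If z is sufficiently close to d(γ−1)/(2s−γ) from above and q > (d+2s)/((2s−1)γ′), then θ ∈ [1/(2s), 1/γ), and in particular θγ < 1. -/

import Mathlib

/-!
The defining relation of `θ` is affine in the reciprocal exponents `1/d`, `1/q`, `1/z`, and solving
it gives `θ * (1/q - 2s/d - 1/z) = 1/(γq) - 1/d - 1/z`. Once `1/z > 1/q - 2s/d`, the bracket is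
negative, and the two bounds `θγ < 1` and `2sθ ≥ 1` become the linear conditions
`(γ - 1)/z < (2s - γ)/d` (that is, `z > d(γ-1)/(2s-γ)`) and `(2s - γ)/q ≤ γ(2s - 1)/z`.
At the critical exponent `z = d(γ-1)/(2s-γ)` the two strict conditions involving `1/q` hold
because `q(2s - 1)γ' > d`, so they persist for `z` slightly above it.
-/

open Filter Topology

theorem interpolation_exponent_bounds {e r w s γ θ : ℝ} (hs : 0 < s) (hγ : 0 < γ)
    (hA : r - 2*s*e < w) (hlo : (γ - 1)*w < (2*s - γ)*e) (hhi : (2*s - γ)*r ≤ γ*(2*s - 1)*w)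
    (heq : r/γ = e + θ*(r - 2*s*e) + (1 - θ)*w) :
    1/(2*s) ≤ θ ∧ θ < 1/γ ∧ θ*γ < 1 := by
  have hθ : θ*γ*(r - 2*s*e - w) = r - γ*e - γ*w := by
    field_simp at heq
    linear_combination -heq
  have hA' : r - 2*s*e - w < 0 := by linarith
  have hup : θ*γ < 1 := by
    rw [← mul_lt_mul_right_of_neg hA', hθ]
    linarith
  have hdown : 1 ≤ 2*s*θ := by
    rw [← mul_le_mul_right_of_neg hA', ← mul_le_mul_iff_right₀ hγ]
    linear_combination hhi + 2*s*hθ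
  refine ⟨?_, (lt_div_iff₀ hγ).2 hup, hup⟩
  rw [div_le_iff₀ (by positivity)]
  linarith

theorem mul_sub_one_lt_of_div_lt {d s γ q : ℝ} (hs : 1/2 < s) (hγ : 1 < γ)
    (hq : (d + 2*s)/((2*s - 1)*(γ/(γ - 1))) < q) : d*(γ - 1) < γ*q*(2*s - 1) := by
  have hγ1 : 0 < γ - 1 := by linarith
  have hs1 : 0 < 2*s - 1 := by linarith
  rw [div_lt_iff₀ (by positivity)] at hq
  calc d*(γ - 1) < (d + 2*s)*(γ - 1) := by nlinarith
    _ < q*((2*s - 1)*(γ/(γ - 1)))*(γ - 1) := mul_lt_mul_of_pos_right hq hγ1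
    _ = γ*q*(2*s - 1) := by field_simp

/-- if `z > d(γ−1)/(2s−γ)` is close enough to this threshold and
`q > (d+2s)/((2s−1)γ′)`, then the Gagliardo–Nirenberg interpolation parameter `θ`
defined by `1/(γq) = 1/d + θ(1/q − 2s/d) + (1−θ)/z` lies in `[1/(2s), 1/γ)`,
so in particular `θγ < 1`. -/
theorem stmt7 (d : ℕ) (hd : 1 ≤ d) (s γ γ' q : ℝ)
    (hs : 1/2 < s ∧ s < 1)
    (hγ : 1 < γ ∧ γ < 2*s)
    (hγ' : γ' = γ/(γ - 1))
    (hq1 : 1 < q)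
    (hq : ((d : ℝ) + 2*s)/((2*s - 1)*γ') < q) :
    ∃ z₀ : ℝ, (d : ℝ)*(γ - 1)/(2*s - γ) < z₀ ∧
      ∀ z θ : ℝ, (d : ℝ)*(γ - 1)/(2*s - γ) < z → z < z₀ →
        1/(γ*q) = 1/(d : ℝ) + θ*(1/q - 2*s/(d : ℝ)) + (1 - θ)/z →
        1/(2*s) ≤ θ ∧ θ < 1/γ ∧ θ*γ < 1 := by
  obtain ⟨hs, -⟩ := hs
  obtain ⟨hγ1, hγs⟩ := hγ
  subst hγ'
  have hd : (0 : ℝ) < d := by exact_mod_cast hd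
  have hq0 : 0 < q := by linarith
  have hγ_sub : 0 < γ - 1 := by linarith
  have hsγ_sub : 0 < 2*s - γ := by linarith
  have key := mul_sub_one_lt_of_div_lt hs hγ1 hq
  set zc := (d : ℝ)*(γ - 1)/(2*s - γ)
  have hzc_inv : 1/zc = (2*s - γ)/(d*(γ - 1)) := one_div_div _ _
  have hlim : Tendsto (fun z : ℝ => 1/z) (𝓝 zc) (𝓝 (1/zc)) :=
    tendsto_const_nhds.div tendsto_id (by positivity)
  have hev : ∀ᶠ z in 𝓝 zc, (2*s - γ)*(1/q) < γ*(2*s - 1)*(1/z) ∧ 1/q - 2*s*(1/d) < 1/z := by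
    refine ((hlim.const_mul _).eventually_const_lt ?_).and (hlim.eventually_const_lt ?_) <;>
    · rw [hzc_inv]
      field_simp
      nlinarith
  obtain ⟨z₀, hz₀, hnear⟩ := mem_nhdsGT_iff_exists_Ioo_subset.1 (nhdsWithin_le_nhds hev)
  refine ⟨z₀, hz₀, fun z θ hz hz_lt heq => ?_⟩
  obtain ⟨hhi, hA⟩ := hnear ⟨hz, hz_lt⟩
  have hlo : (γ - 1)*(1/z) < (2*s - γ)*(1/d) := by
    have hz0 : 0 < z := lt_trans (by positivity) hz
    rw [div_lt_iff₀ hsγ_sub] at hz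
    field_simp
    linarith
  exact interpolation_exponent_bounds (by linarith) (by linarith) hA hlo hhi.le
    (by linear_combination heq)
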